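/- Let G be a finite graph with a designated root vertex r, and let H be the graph with vertex set (V(G) × {0,1}) ∪ {q_0, q_1, q_2, …}, where each V(G) × {b} induces a copy of G, the vertex q_0 is adjacent to (r,0) and (r,1), and q_0, q_1, q_2, … form a one-way infinite path (the rooted product of P_3 with two copies of G and an infinite path). If G has perfect state transfer between vertices u and v at time τ, i.e., e^{−iτA(G)} e_u = γ e_v for some γ ∈ ℂ with |γ| = 1, then H has perfect state transfer between the antisymmetric dual-rail states: e^{−iτA(H)} ( (e_{(u,0)} − e_{(u,1)})/√2 ) = γ (e_{(v,0)} − e_{(v,1)})/√2. -/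

import Mathlib

/-!
The encoding `g ↦ ∑ w, g w • (e_{(w,0)} - e_{(w,1)})` of `ℂ^{V(G)}` into `ℓ²(V(H))` intertwines
`A(G)` with `A(H)`: on the two copies of `G` this holds edge by edge, and every path vertex `q_j`
is joined to `(w,0)` exactly when it is joined to `(w,1)`, so `A(H)` gives an antisymmetric vector
no component on the path. Intertwining passes term by term to the exponential series, hence
`e^{-iτA(H)}` maps the encoding of `e_u` to the encoding of `e^{-iτA(G)} e_u = γ e_v`.
-/

noncomputable section

open Matrix

/-- Vertices of the dual-rail graph `H` (the rooted product of `P_3` with two copies of a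
finite rooted graph `G` and an infinite path): `Sum.inl (w, b)` is the vertex `w` in the
copy `b ∈ {0,1}` of `G`, and `Sum.inr j` is the path vertex `q_j` (for `j ≥ 0`). -/
abbrev DualRailV (n : ℕ) := (Fin n × Bool) ⊕ ℕ

/-- Adjacency in `H`: `(w,b)(w',b)` for each edge `ww'` of `G` and each `b`;
`q_0 (r,0)` and `q_0 (r,1)`; and `q_j q_{j+1}` for `j ≥ 0`. -/
def dualRailAdj (n : ℕ) (G : SimpleGraph (Fin n)) (r : Fin n)
    (x y : DualRailV n) : Prop :=
  (∃ (a b : Fin n) (s : Bool), G.Adj a b ∧ x = Sum.inl (a, s) ∧ y = Sum.inl (b, s)) ∨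
  (∃ s : Bool, (x = Sum.inr 0 ∧ y = Sum.inl (r, s)) ∨ (y = Sum.inr 0 ∧ x = Sum.inl (r, s))) ∨
  (∃ j : ℕ, (x = Sum.inr j ∧ y = Sum.inr (j + 1)) ∨ (y = Sum.inr j ∧ x = Sum.inr (j + 1)))

/-- The Hilbert space `ℓ²(V(H))`. -/
abbrev dualRailSpace (n : ℕ) := lp (fun _ : DualRailV n => ℂ) 2

/-- The standard orthonormal basis vector `e_w` of `ℓ²(V(H))`. -/
def stdVec {n : ℕ} (w : DualRailV n) : dualRailSpace n := lp.single 2 w 1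

open scoped Classical

open NormedSpace in
theorem ContinuousLinearMap.exp_comp_eq_comp_exp {𝕜 E F : Type*} [RCLike 𝕜]
    [NormedAddCommGroup E] [NormedSpace 𝕜 E] [CompleteSpace E]
    [NormedAddCommGroup F] [NormedSpace 𝕜 F] [CompleteSpace F]
    (T : E →L[𝕜] F) {a : F →L[𝕜] F} {b : E →L[𝕜] E} (h : a.comp T = T.comp b) :
    (exp a).comp T = T.comp (exp b) := by
  have hpow : ∀ k : ℕ, (a ^ k).comp T = T.comp (b ^ k) := by
    intro k
    induction k with
    | zero => rfl
    | succ k ih =>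
      rw [pow_succ, pow_succ, ContinuousLinearMap.mul_def, ContinuousLinearMap.comp_assoc, h,
        ← ContinuousLinearMap.comp_assoc, ih, ContinuousLinearMap.mul_def,
        ContinuousLinearMap.comp_assoc]
  have ha := (exp_series_hasSum_exp' (𝕂 := 𝕜) a).mapL
    ((ContinuousLinearMap.compL 𝕜 E F F).flip T)
  have hb := (exp_series_hasSum_exp' (𝕂 := 𝕜) b).mapL (ContinuousLinearMap.compL 𝕜 E E F T)
  simp only [ContinuousLinearMap.flip_apply, ContinuousLinearMap.compL_apply,
    ContinuousLinearMap.smul_comp, ContinuousLinearMap.comp_smul, hpow] at ha hb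
  exact ha.unique hb

open NormedSpace in
open scoped Norms.Operator in
theorem Matrix.exp_mulVec {ι 𝕜 : Type*} [Fintype ι] [DecidableEq ι] [RCLike 𝕜]
    (M : Matrix ι ι 𝕜) (x : ι → 𝕜) :
    exp M *ᵥ x = exp (LinearMap.toContinuousLinearMap (toLin' M)) x := by
  -- `exp` depends only on the topology, so any matrix norm (here the operator norm) will do.
  let φ := (Matrix.toLinAlgEquiv' (R := 𝕜) (n := ι)).trans
    (Module.End.toContinuousLinearMap (ι → 𝕜))
  have hφ : Continuous φ := LinearMap.continuous_of_finiteDimensional φ.toLinearMap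
  exact congrArg (· x) (map_exp φ hφ M)

section DualRail

variable {n : ℕ}

lemma stdVec_apply (x y : DualRailV n) :
    (stdVec y : DualRailV n → ℂ) x = if x = y then 1 else 0 := by
  simp [stdVec, Pi.single_apply]

lemma inner_stdVec_left (x : DualRailV n) (f : dualRailSpace n) :
    inner ℂ (stdVec x) f = f x := by
  simp [stdVec, lp.inner_single_left]

def dualRailEncode (n : ℕ) : (Fin n → ℂ) →L[ℂ] dualRailSpace n :=
  ∑ w : Fin n, (ContinuousLinearMap.proj w).smulRight
    (stdVec (Sum.inl (w, false)) - stdVec (Sum.inl (w, true)))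

lemma dualRailEncode_apply (g : Fin n → ℂ) :
    dualRailEncode n g
      = ∑ w, g w • (stdVec (Sum.inl (w, false)) - stdVec (Sum.inl (w, true))) := by
  simp [dualRailEncode]

lemma dualRailEncode_single (u : Fin n) :
    dualRailEncode n (Pi.single u 1)
      = stdVec (Sum.inl (u, false)) - stdVec (Sum.inl (u, true)) := by
  simp [dualRailEncode_apply, Pi.single_apply]

lemma dualRailEncode_apply_apply (g : Fin n → ℂ) (x : DualRailV n) :
    dualRailEncode n g x
      = ∑ w, g w * (stdVec (Sum.inl (w, false)) x - stdVec (Sum.inl (w, true)) x) := by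
  simp only [dualRailEncode_apply, lp.coeFn_sum, Finset.sum_apply, lp.coeFn_smul, lp.coeFn_sub,
    Pi.smul_apply, Pi.sub_apply, smul_eq_mul]

lemma dualRailEncode_apply_inl (g : Fin n → ℂ) (a : Fin n) (s : Bool) :
    dualRailEncode n g (Sum.inl (a, s)) = if s then -g a else g a := by
  cases s <;> simp [dualRailEncode_apply_apply, stdVec_apply]

lemma dualRailEncode_apply_inr (g : Fin n → ℂ) (j : ℕ) :
    dualRailEncode n g (Sum.inr j) = 0 := by
  simp [dualRailEncode_apply_apply, stdVec_apply]

lemma dualRailAdj_inl_inl {G : SimpleGraph (Fin n)} {r : Fin n} (a w : Fin n) (s b : Bool) :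
    dualRailAdj n G r (Sum.inl (a, s)) (Sum.inl (w, b)) ↔ G.Adj a w ∧ s = b := by
  simp [dualRailAdj, eq_comm]

lemma dualRailAdj_inr_inl {G : SimpleGraph (Fin n)} {r : Fin n} (j : ℕ) (w : Fin n) (b : Bool) :
    dualRailAdj n G r (Sum.inr j) (Sum.inl (w, b)) ↔ j = 0 ∧ w = r := by
  simp [dualRailAdj, eq_comm]

theorem comp_dualRailEncode {G : SimpleGraph (Fin n)} [DecidableRel G.Adj] {r : Fin n}
    {A : dualRailSpace n →L[ℂ] dualRailSpace n}
    (hA : ∀ x y : DualRailV n, (inner ℂ (stdVec x) (A (stdVec y)) : ℂ)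
      = if dualRailAdj n G r x y then 1 else 0) :
    A.comp (dualRailEncode n)
      = (dualRailEncode n).comp (LinearMap.toContinuousLinearMap (toLin' (G.adjMatrix ℂ))) := by
  have hA' (x y : DualRailV n) : A (stdVec y) x = if dualRailAdj n G r x y then 1 else 0 := by
    rw [← inner_stdVec_left, hA]
  apply ContinuousLinearMap.coe_injective
  refine LinearMap.pi_ext' fun w => LinearMap.ext_ring ?_
  suffices A (stdVec (Sum.inl (w, false)) - stdVec (Sum.inl (w, true)))
      = dualRailEncode n ((G.adjMatrix ℂ).col w) by
    simpa [dualRailEncode_single]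
  ext x
  rw [map_sub, lp.coeFn_sub, Pi.sub_apply, hA', hA']
  rcases x with ⟨a, s⟩ | j
  · cases s <;> simp [dualRailAdj_inl_inl, dualRailEncode_apply_inl]
  · simp [dualRailAdj_inr_inl, dualRailEncode_apply_inr]

end DualRail

theorem dual_rail_pst_general (n : ℕ) (G : SimpleGraph (Fin n)) [DecidableRel G.Adj] (r : Fin n)
    (u v : Fin n) (τ : ℝ) (γ : ℂ)
    (hpst : NormedSpace.exp ((-(τ : ℂ) * Complex.I) • G.adjMatrix ℂ) *ᵥ
        (Pi.single u 1 : Fin n → ℂ)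
      = γ • (Pi.single v 1 : Fin n → ℂ))
    (A : dualRailSpace n →L[ℂ] dualRailSpace n)
    (hA : ∀ x y : DualRailV n, (inner ℂ (stdVec x) (A (stdVec y)) : ℂ)
      = if dualRailAdj n G r x y then 1 else 0) :
    NormedSpace.exp ((-(τ : ℂ) * Complex.I) • A)
        (((Real.sqrt 2 : ℂ))⁻¹ •
          (stdVec (Sum.inl (u, false) : DualRailV n)
            - stdVec (Sum.inl (u, true) : DualRailV n)))
      = γ • (((Real.sqrt 2 : ℂ))⁻¹ •
          (stdVec (Sum.inl (v, false) : DualRailV n)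
            - stdVec (Sum.inl (v, true) : DualRailV n))) := by
  set s : ℂ := -(τ : ℂ) * Complex.I
  have hcomm : (s • A).comp (dualRailEncode n) = (dualRailEncode n).comp
      (LinearMap.toContinuousLinearMap (toLin' (s • G.adjMatrix ℂ))) := by
    rw [ContinuousLinearMap.smul_comp, comp_dualRailEncode hA, map_smul, map_smul,
      ContinuousLinearMap.comp_smul]
  have hexp : NormedSpace.exp (s • A) (dualRailEncode n (Pi.single u 1))
      = dualRailEncode n (γ • Pi.single v 1) := by
    rw [← ContinuousLinearMap.comp_apply, ContinuousLinearMap.exp_comp_eq_comp_exp _ hcomm,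
      ContinuousLinearMap.comp_apply, ← Matrix.exp_mulVec, hpst]
  rw [← dualRailEncode_single, ← dualRailEncode_single, map_smul, hexp, map_smul, smul_comm]

/-- Dual-rail encoding: if `G` has perfect state transfer between `u` and `v` at time `τ`
(`e^{-iτA(G)} e_u = γ e_v`, `|γ| = 1`), then the graph `H` built from two copies of `G`
whose roots are both joined to the first vertex `q_0` of an infinite path has perfect
state transfer between the antisymmetric dual-rail states:
`e^{-iτA(H)} (e_{(u,0)} - e_{(u,1)})/√2 = γ (e_{(v,0)} - e_{(v,1)})/√2`. -/
theorem dual_rail_pst (n : ℕ) (G : SimpleGraph (Fin n)) [DecidableRel G.Adj] (r : Fin n)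
    (u v : Fin n) (τ : ℝ) (γ : ℂ) (hγ : ‖γ‖ = 1)
    (hpst : NormedSpace.exp ((-(τ : ℂ) * Complex.I) • G.adjMatrix ℂ) *ᵥ
        (Pi.single u 1 : Fin n → ℂ)
      = γ • (Pi.single v 1 : Fin n → ℂ))
    (A : dualRailSpace n →L[ℂ] dualRailSpace n) (hsa : IsSelfAdjoint A)
    (hA : ∀ x y : DualRailV n, (inner ℂ (stdVec x) (A (stdVec y)) : ℂ)
      = if dualRailAdj n G r x y then 1 else 0) :
    NormedSpace.exp ((-(τ : ℂ) * Complex.I) • A)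
        (((Real.sqrt 2 : ℂ))⁻¹ •
          (stdVec (Sum.inl (u, false) : DualRailV n)
            - stdVec (Sum.inl (u, true) : DualRailV n)))
      = γ • (((Real.sqrt 2 : ℂ))⁻¹ •
          (stdVec (Sum.inl (v, false) : DualRailV n)
            - stdVec (Sum.inl (v, true) : DualRailV n))) :=
  dual_rail_pst_general n G r u v τ γ hpst A hA
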